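/- For c > 0 and nonnegative integer v, ∫₀^∞ x^v · ln(x) · Q(√(c·x)) dx = (v!/2)·(2/c)^{v+1}·((2v+1)!!/(2v+2)!!)·[ln(2/c) + ψ(v + 3/2) − 1/(v+1)], where Q is the Gaussian Q-function and ψ is the digamma function. -/

import Mathlib

open MeasureTheory Real Nat

open Set Filter Asymptotics

/-- The Gaussian Q-function `Q(x) = (1/√(2π)) ∫ₓ^∞ e^{-t²/2} dt`. -/
noncomputable def Qfun (x : ℝ) : ℝ :=
  (1 / Real.sqrt (2*π)) * ∫ t in Set.Ioi x, Real.exp (-t^2/2)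

/-- The digamma function `ψ = (log ∘ Γ)'`. -/
noncomputable def digamma (x : ℝ) : ℝ :=
  deriv (fun y => Real.log (Real.Gamma y)) x

lemma aux_gauss_integrable : Integrable (fun t : ℝ => Real.exp (-t^2/2)) := by
  have h := integrable_exp_neg_mul_sq (show (0:ℝ) < 1/2 by norm_num)
  exact h.congr (ae_of_all _ fun t => by norm_num [neg_div]; ring_nf)

lemma aux_Qfun_eq (y : ℝ) :
    Qfun y = (1 / Real.sqrt (2*π)) *
      ((∫ t in Set.Ioi (0:ℝ), Real.exp (-t^2/2)) - ∫ t in (0:ℝ)..y, Real.exp (-t^2/2)) := by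
  rcases le_or_gt 0 y with hy | hy
  · rw [intervalIntegral.integral_of_le hy, Qfun]
    have hsplit : Set.Ioc (0:ℝ) y ∪ Set.Ioi y = Set.Ioi 0 := Set.Ioc_union_Ioi_eq_Ioi hy
    have := MeasureTheory.setIntegral_union (Set.Ioc_disjoint_Ioi le_rfl) measurableSet_Ioi
      (aux_gauss_integrable.integrableOn (s := Set.Ioc 0 y))
      (aux_gauss_integrable.integrableOn (s := Set.Ioi y)) (f := fun t : ℝ => Real.exp (-t^2/2))
    rw [hsplit] at this
    rw [this]; ring
  · rw [intervalIntegral.integral_of_ge hy.le, Qfun]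
    have hsplit : Set.Ioc y (0:ℝ) ∪ Set.Ioi 0 = Set.Ioi y := Set.Ioc_union_Ioi_eq_Ioi hy.le
    have := MeasureTheory.setIntegral_union (Set.Ioc_disjoint_Ioi le_rfl) measurableSet_Ioi
      (aux_gauss_integrable.integrableOn (s := Set.Ioc y 0))
      (aux_gauss_integrable.integrableOn (s := Set.Ioi 0)) (f := fun t : ℝ => Real.exp (-t^2/2))
    rw [hsplit] at this
    rw [this]; ring

lemma aux_gauss_cont : Continuous (fun t : ℝ => Real.exp (-t^2/2)) := by fun_prop

lemma aux_Qfun_hasDeriv (y : ℝ) :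
    HasDerivAt Qfun (-((1 / Real.sqrt (2*π)) * Real.exp (-y^2/2))) y := by
  have h1 : HasDerivAt (fun u : ℝ => ∫ t in (0:ℝ)..u, Real.exp (-t^2/2)) (Real.exp (-y^2/2)) y :=
    intervalIntegral.integral_hasDerivAt_right (aux_gauss_cont.intervalIntegrable _ _)
      (aux_gauss_cont.stronglyMeasurableAtFilter _ _) aux_gauss_cont.continuousAt
  have h2 := ((h1.const_sub (∫ t in Set.Ioi (0:ℝ), Real.exp (-t^2/2))).const_mul
    (1 / Real.sqrt (2*π)))
  have h3 : HasDerivAt (fun u : ℝ => (1 / Real.sqrt (2*π)) *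
      ((∫ t in Set.Ioi (0:ℝ), Real.exp (-t^2/2)) - ∫ t in (0:ℝ)..u, Real.exp (-t^2/2)))
      (-((1 / Real.sqrt (2*π)) * Real.exp (-y^2/2))) y := by
    exact h2.congr_deriv (by ring)
  exact h3.congr_of_eventuallyEq (Filter.Eventually.of_forall fun u => aux_Qfun_eq u)

lemma aux_Qfun_cont : Continuous Qfun :=
  continuous_iff_continuousAt.2 fun y => (aux_Qfun_hasDeriv y).continuousAt

lemma aux_Qfun_nonneg (y : ℝ) : 0 ≤ Qfun y :=
  mul_nonneg (by positivity) (setIntegral_nonneg measurableSet_Ioi fun t _ => (Real.exp_pos _).le)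

lemma aux_Qfun_le_one (y : ℝ) : Qfun y ≤ 1 := by
  rw [Qfun]
  have h1 : (∫ t in Set.Ioi y, Real.exp (-t^2/2)) ≤ ∫ t : ℝ, Real.exp (-t^2/2) :=
    setIntegral_le_integral aux_gauss_integrable
      (ae_of_all _ fun t => (Real.exp_pos _).le)
  have h2 : (∫ t : ℝ, Real.exp (-t^2/2)) = Real.sqrt (2*π) := by
    have := integral_gaussian (1/2)
    rw [show π / (1/2 : ℝ) = 2*π by ring] at this
    rw [← this]
    congr 1 with t
    norm_num [neg_div]; ring_nf
  have h3 : 0 < Real.sqrt (2*π) := Real.sqrt_pos.2 (by positivity)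
  calc (1 / Real.sqrt (2*π)) * ∫ t in Set.Ioi y, Real.exp (-t^2/2)
      ≤ (1 / Real.sqrt (2*π)) * Real.sqrt (2*π) := by
        apply mul_le_mul_of_nonneg_left _ (by positivity)
        rw [← h2]; exact h1
    _ = 1 := by field_simp

lemma aux_Qfun_bound {y : ℝ} (hy : 0 < y) :
    Qfun y ≤ (1 / Real.sqrt (2*π)) * ((2/y) * Real.exp (-y^2/2)) := by
  rw [Qfun]
  apply mul_le_mul_of_nonneg_left _ (by positivity)
  have hb : 0 < y/2 := by positivity
  have hmono : (∫ t in Set.Ioi y, Real.exp (-t^2/2)) ≤ ∫ t in Set.Ioi y, Real.exp (-(y/2) * t) := by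
    apply setIntegral_mono_on aux_gauss_integrable.integrableOn
      (exp_neg_integrableOn_Ioi y hb) measurableSet_Ioi
    intro t ht
    have ht' : y < t := ht
    apply Real.exp_le_exp.2
    nlinarith
  have hval : (∫ t in Set.Ioi y, Real.exp (-(y/2) * t)) = (2/y) * Real.exp (-y^2/2) := by
    have h := integral_comp_mul_left_Ioi (fun u : ℝ => Real.exp (-u)) y hb
    simp only [smul_eq_mul] at h
    have : (fun t : ℝ => Real.exp (-(y/2) * t)) = fun t : ℝ => Real.exp (-(y/2 * t)) := by
      ext t; ring_nf
    rw [this, h, integral_exp_neg_Ioi]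
    rw [show y/2*y = y^2/2 by ring]
    rw [show (y/2)⁻¹ = 2/y by field_simp, neg_div]
  calc (∫ t in Set.Ioi y, Real.exp (-t^2/2)) ≤ ∫ t in Set.Ioi y, Real.exp (-(y/2) * t) := hmono
    _ = (2/y) * Real.exp (-y^2/2) := hval

/-- The real Gamma function has derivative given by the log-weighted integral. -/
lemma aux_hasDerivAt_Gamma {s : ℝ} (hs : 0 < s) :
    HasDerivAt Real.Gamma (∫ t in Set.Ioi (0:ℝ), t ^ (s-1) * Real.log t * Real.exp (-t)) s := by
  have hs' : 0 < (s:ℂ).re := by simpa using hs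
  have h1 := Complex.hasDerivAt_GammaIntegral hs'
  -- Gamma agrees with GammaIntegral near s
  have hopen : IsOpen {z : ℂ | 0 < z.re} := isOpen_lt continuous_const Complex.continuous_re
  have hev : Complex.Gamma =ᶠ[nhds (s:ℂ)] Complex.GammaIntegral := by
    filter_upwards [hopen.mem_nhds hs'] with z hz
    exact Complex.Gamma_eq_integral hz
  have h2 : HasDerivAt Complex.Gamma
      (∫ t : ℝ in Set.Ioi 0, (t:ℂ) ^ ((s:ℂ) - 1) * (↑(Real.log t) * ↑(Real.exp (-t)))) (s:ℂ) :=
    h1.congr_of_eventuallyEq hev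
  have hD : (∫ t : ℝ in Set.Ioi 0, (t:ℂ) ^ ((s:ℂ) - 1) * (↑(Real.log t) * ↑(Real.exp (-t))))
      = ((∫ t in Set.Ioi (0:ℝ), t ^ (s-1) * Real.log t * Real.exp (-t) : ℝ) : ℂ) := by
    have step1 : (∫ t : ℝ in Set.Ioi 0, (t:ℂ) ^ ((s:ℂ) - 1) * (↑(Real.log t) * ↑(Real.exp (-t))))
        = ∫ t in Set.Ioi (0:ℝ), ((t ^ (s-1) * Real.log t * Real.exp (-t) : ℝ) : ℂ) := by
      apply setIntegral_congr_fun measurableSet_Ioi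
      intro t ht
      dsimp only
      rw [show ((s:ℂ) - 1) = ((s - 1 : ℝ) : ℂ) by push_cast; ring,
        ← Complex.ofReal_cpow (le_of_lt ht)]
      simp only [Complex.ofReal_mul]
      ring
    rw [step1]
    exact integral_ofReal
  rw [hD] at h2
  have h3 := h2.real_of_complex
  have h4 : (fun x : ℝ => (Complex.Gamma (x:ℂ)).re) = Real.Gamma := by
    ext x; rw [Complex.Gamma_ofReal]; simp
  rw [h4] at h3
  simpa using h3

/-- Integrability of `t^(s-1) log t e^{-t}` on `(0,∞)`. -/
lemma aux_integrableOn_rpow_log_exp {s : ℝ} (hs : 0 < s) :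
    IntegrableOn (fun t : ℝ => t ^ (s-1) * Real.log t * Real.exp (-t)) (Set.Ioi 0) := by
  set f : ℝ → ℂ := fun t => ((Real.exp (-t) : ℝ) : ℂ) with hf
  have hfc : LocallyIntegrableOn f (Set.Ioi 0) := by
    refine (Continuous.continuousOn ?_).locallyIntegrableOn measurableSet_Ioi
    exact Complex.continuous_ofReal.comp (Real.continuous_exp.comp continuous_neg)
  have hf_top : f =O[atTop] (· ^ (-(s + 1))) := by
    rw [← isBigO_norm_left]
    simp_rw [hf, Complex.norm_real, isBigO_norm_left]
    simpa only [neg_one_mul] using (isLittleO_exp_neg_mul_rpow_atTop zero_lt_one _).isBigO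
  have hf_bot : f =O[nhdsWithin 0 (Set.Ioi 0)] (· ^ (-(0:ℝ))) := by
    simp_rw [neg_zero, Real.rpow_zero]
    refine isBigO_const_of_tendsto (?_ : Filter.Tendsto _ _ (nhds (1 : ℂ))) one_ne_zero
    rw [(by simp : (1 : ℂ) = ((Real.exp (-0) : ℝ) : ℂ))]
    exact (Complex.continuous_ofReal.comp
      (Real.continuous_exp.comp continuous_neg)).continuousWithinAt
  have hs_top : (s:ℂ).re < s + 1 := by simpa using lt_add_one s
  have hs_bot : (0:ℝ) < (s:ℂ).re := by simpa using hs
  have H := (mellin_hasDerivAt_of_isBigO_rpow (E := ℂ) hfc hf_top hs_top hf_bot hs_bot).1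
  -- H : MellinConvergent (fun t => Real.log t • f t) s
  have hC : IntegrableOn (fun t : ℝ => (t:ℂ) ^ ((s:ℂ) - 1) • (Real.log t • f t)) (Set.Ioi 0) := H
  have hC2 : IntegrableOn
      (fun t : ℝ => ((t ^ (s-1) * Real.log t * Real.exp (-t) : ℝ) : ℂ)) (Set.Ioi 0) := by
    apply hC.congr_fun _ measurableSet_Ioi
    intro t ht
    simp only [hf, Complex.real_smul, smul_eq_mul]
    rw [show ((s:ℂ) - 1) = ((s - 1 : ℝ) : ℂ) by push_cast; ring,
      ← Complex.ofReal_cpow (le_of_lt ht)]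
    simp only [Complex.ofReal_mul]
    ring
  have h5 : IntegrableOn
      (fun x : ℝ => RCLike.re ((x ^ (s-1) * Real.log x * Real.exp (-x) : ℝ) : ℂ)) (Set.Ioi 0) :=
    hC2.re
  apply h5.congr_fun _ measurableSet_Ioi
  intro t ht
  dsimp only
  exact RCLike.ofReal_re _

lemma aux_log_integral_eq {s : ℝ} (hs : 0 < s) :
    (∫ t in Set.Ioi (0:ℝ), t ^ (s-1) * Real.log t * Real.exp (-t))
      = Real.Gamma s * digamma s := by
  have h := aux_hasDerivAt_Gamma hs
  have hpos := Real.Gamma_pos_of_pos hs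
  have h2 : HasDerivAt (fun y => Real.log (Real.Gamma y))
      ((∫ t in Set.Ioi (0:ℝ), t ^ (s-1) * Real.log t * Real.exp (-t)) / Real.Gamma s) s :=
    h.log hpos.ne'
  have h3 : digamma s
      = (∫ t in Set.Ioi (0:ℝ), t ^ (s-1) * Real.log t * Real.exp (-t)) / Real.Gamma s :=
    h2.deriv
  rw [h3]
  field_simp

lemma aux_intOn_P {a r : ℝ} (ha : 0 < a) (hr : 0 < r) :
    IntegrableOn (fun x : ℝ => x ^ (a-1) * Real.exp (-(r*x))) (Set.Ioi 0) := by
  set F : ℝ → ℝ := fun u => (u/r) ^ (a-1) * Real.exp (-u) with hF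
  have h1 : IntegrableOn F (Set.Ioi 0) := by
    have h2 : IntegrableOn (fun x : ℝ => (r ^ (a-1) : ℝ)⁻¹ * (Real.exp (-x) * x ^ (a-1)))
        (Set.Ioi 0) := (Real.GammaIntegral_convergent ha).const_mul ((r ^ (a-1) : ℝ)⁻¹)
    apply h2.congr_fun _ measurableSet_Ioi
    intro u hu
    rw [hF]
    dsimp only
    rw [Real.div_rpow (le_of_lt hu) hr.le]
    field_simp
  have h3 := (integrableOn_Ioi_comp_mul_left_iff F 0 hr).2 (by simpa using h1)
  apply h3.congr_fun _ measurableSet_Ioi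
  intro x _
  rw [hF]
  dsimp only
  rw [mul_div_cancel_left₀ x hr.ne']

lemma aux_intOn_PL {a r : ℝ} (ha : 0 < a) (hr : 0 < r) :
    IntegrableOn (fun x : ℝ => x ^ (a-1) * Real.log x * Real.exp (-(r*x))) (Set.Ioi 0) := by
  set F : ℝ → ℝ := fun u => (u/r) ^ (a-1) * Real.log (u/r) * Real.exp (-u) with hF
  have h1 : IntegrableOn F (Set.Ioi 0) := by
    have h2 : IntegrableOn (fun x : ℝ => (r ^ (a-1) : ℝ)⁻¹ * (x ^ (a-1) * Real.log x * Real.exp (-x))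
        - ((r ^ (a-1) : ℝ)⁻¹ * Real.log r) * (Real.exp (-x) * x ^ (a-1))) (Set.Ioi 0) :=
      ((aux_integrableOn_rpow_log_exp ha).const_mul ((r ^ (a-1) : ℝ)⁻¹)).sub
        ((Real.GammaIntegral_convergent ha).const_mul ((r ^ (a-1) : ℝ)⁻¹ * Real.log r))
    apply h2.congr_fun _ measurableSet_Ioi
    intro u hu
    rw [hF]
    dsimp only
    rw [Real.div_rpow (le_of_lt hu) hr.le, Real.log_div (ne_of_gt hu) hr.ne']
    field_simp
  have h3 := (integrableOn_Ioi_comp_mul_left_iff F 0 hr).2 (by simpa using h1)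
  apply h3.congr_fun _ measurableSet_Ioi
  intro x _
  rw [hF]
  dsimp only
  rw [mul_div_cancel_left₀ x hr.ne']

lemma aux_val_PL {a r : ℝ} (ha : 0 < a) (hr : 0 < r) :
    (∫ x in Set.Ioi (0:ℝ), x ^ (a-1) * Real.log x * Real.exp (-(r*x)))
      = (1/r) ^ a * (Real.Gamma a * digamma a - Real.log r * Real.Gamma a) := by
  set F : ℝ → ℝ := fun u => (u/r) ^ (a-1) * Real.log (u/r) * Real.exp (-u) with hF
  have key := integral_comp_mul_left_Ioi F 0 hr
  have h0 : (fun x : ℝ => F (r * x)) = fun x : ℝ => x ^ (a-1) * Real.log x * Real.exp (-(r*x)) := by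
    ext x; rw [hF]; dsimp only; rw [mul_div_cancel_left₀ x hr.ne']
  rw [h0, mul_zero] at key
  rw [key]
  have hFval : (∫ u in Set.Ioi (0:ℝ), F u)
      = (r ^ (a-1) : ℝ)⁻¹ * (Real.Gamma a * digamma a) -
        ((r ^ (a-1) : ℝ)⁻¹ * Real.log r) * Real.Gamma a := by
    have hsplit : ∀ u ∈ Set.Ioi (0:ℝ), F u
        = (r ^ (a-1) : ℝ)⁻¹ * (u ^ (a-1) * Real.log u * Real.exp (-u)) -
          ((r ^ (a-1) : ℝ)⁻¹ * Real.log r) * (Real.exp (-u) * u ^ (a-1)) := by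
      intro u hu
      rw [hF]
      dsimp only
      rw [Real.div_rpow (le_of_lt hu) hr.le, Real.log_div (ne_of_gt hu) hr.ne']
      field_simp
    rw [setIntegral_congr_fun measurableSet_Ioi hsplit,
      integral_sub (((aux_integrableOn_rpow_log_exp ha).const_mul _))
        (((Real.GammaIntegral_convergent ha).const_mul _)),
      MeasureTheory.integral_const_mul, MeasureTheory.integral_const_mul, aux_log_integral_eq ha,
      ← Real.Gamma_eq_integral ha]
  rw [hFval]
  have h5 : r ^ a = r ^ (1:ℝ) * r ^ (a-1) := by rw [← Real.rpow_add hr]; norm_num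
  have hra : (1/r : ℝ) ^ a = r⁻¹ * (r ^ (a-1) : ℝ)⁻¹ := by
    rw [one_div, Real.inv_rpow hr.le, h5, Real.rpow_one, mul_inv]
  rw [hra, smul_eq_mul]
  ring

lemma aux_Gamma_add_half (v : ℕ) :
    Real.Gamma ((v:ℝ) + 3/2) = (((2*v+1)‼ : ℕ) : ℝ) * Real.sqrt π / 2^(v+1) := by
  induction v with
  | zero =>
    rw [show ((0:ℕ):ℝ) + 3/2 = 1/2 + 1 by norm_num, Real.Gamma_add_one (by norm_num),
      Real.Gamma_one_half_eq]
    norm_num [Nat.doubleFactorial]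
    ring
  | succ n ih =>
    have hcast : (((n+1:ℕ)):ℝ) + 3/2 = ((n:ℝ) + 3/2) + 1 := by push_cast; ring
    rw [hcast, Real.Gamma_add_one (by positivity), ih,
      show 2*(n+1)+1 = (2*n+1)+2 by ring, Nat.doubleFactorial_add_two]
    push_cast
    rw [pow_succ]
    field_simp
    ring

lemma aux_doubleFactorial_even (v : ℕ) : ((2*v+2)‼ : ℕ) = 2^(v+1) * (v+1)! := by
  rw [show 2*v+2 = 2*(v+1) by ring, Nat.doubleFactorial_two_mul]

set_option maxHeartbeats 1600000 in
/-- For `c > 0` and `v : ℕ`,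
`∫₀^∞ x^v ln(x) Q(√(cx)) dx
  = (v!/2)(2/c)^{v+1}((2v+1)‼/(2v+2)‼)[ln(2/c) + ψ(v+3/2) − 1/(v+1)]`. -/
theorem integral_pow_mul_log_mul_Q (c : ℝ) (hc : 0 < c) (v : ℕ) :
    ∫ x in Set.Ioi (0:ℝ), x ^ v * Real.log x * Qfun (Real.sqrt (c * x))
      = ((v.factorial : ℝ) / 2) * (2/c) ^ (v+1)
          * (((2*v+1)‼ : ℝ) / ((2*v+2)‼ : ℝ))
          * (Real.log (2/c) + digamma ((v:ℝ) + 3/2) - 1 / ((v:ℝ) + 1)) := by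
  set k : ℝ := 1 / Real.sqrt (2*π) with hk
  have hv1 : (0:ℝ) < (v:ℝ) + 1 := by positivity
  set G : ℝ → ℝ := fun x => x^(v+1) * Real.log x * (1/((v:ℝ)+1))
      - x^(v+1) * (1/((v:ℝ)+1)^2) with hG
  set gd : ℝ → ℝ := fun x => -(k * Real.exp (-(c*x)/2) * (c / (2 * Real.sqrt (c*x)))) with hgd
  set f₁ : ℝ → ℝ := fun x => x ^ v * Real.log x * Qfun (Real.sqrt (c * x)) with hf₁
  set H : ℝ → ℝ := fun x => G x * Qfun (Real.sqrt (c * x)) with hH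
  set a₁ : ℝ := (v:ℝ) + 1/2 with ha₁def
  set a₂ : ℝ := (v:ℝ) + 3/2 with ha₂def
  have ha₁ : 0 < a₁ := by rw [ha₁def]; positivity
  have ha₂ : 0 < a₂ := by rw [ha₂def]; positivity
  have hr : (0:ℝ) < c/2 := by positivity
  have hkpos : 0 < k := by rw [hk]; positivity
  -- pointwise powers
  have e1 : ∀ x : ℝ, 0 < x → x ^ (a₁ - 1) = x ^ v / Real.sqrt x := by
    intro x hx
    rw [ha₁def, show (v:ℝ) + 1/2 - 1 = (v:ℝ) - 1/2 by ring, Real.rpow_sub hx,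
      Real.rpow_natCast, show ((1:ℝ)/2) = (1/2 : ℝ) by norm_num, ← Real.sqrt_eq_rpow]
  have e2 : ∀ x : ℝ, 0 < x → x ^ (a₂ - 1) = x ^ (v+1) / Real.sqrt x := by
    intro x hx
    rw [ha₂def, show (v:ℝ) + 3/2 - 1 = ((v:ℝ)+1) - 1/2 by ring, Real.rpow_sub hx,
      show ((v:ℝ)+1) = ((v+1 : ℕ) : ℝ) by push_cast; ring,
      Real.rpow_natCast, ← Real.sqrt_eq_rpow]
  -- the Q bound in convenient form
  have hQb : ∀ x : ℝ, 0 < x → Qfun (Real.sqrt (c*x))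
      ≤ k * ((2/(Real.sqrt c * Real.sqrt x)) * Real.exp (-(c/2*x))) := by
    intro x hx
    have hcx : 0 < c*x := by positivity
    have h := aux_Qfun_bound (Real.sqrt_pos.2 hcx)
    rw [Real.sq_sqrt hcx.le] at h
    rw [show -(c/2*x) = -(c*x)/2 by ring, ← Real.sqrt_mul hc.le]
    exact h
  have hfrac : ∀ x : ℝ, 0 < x → c / (2 * Real.sqrt (c*x))
      = Real.sqrt c / (2 * Real.sqrt x) := by
    intro x hx
    have hsx : 0 < Real.sqrt x := Real.sqrt_pos.2 hx
    have hsc : 0 < Real.sqrt c := Real.sqrt_pos.2 hc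
    rw [Real.sqrt_mul hc.le, div_eq_div_iff (by positivity) (by positivity)]
    nlinarith [Real.mul_self_sqrt hc.le]
  -- derivative of G
  have hGder : ∀ x ∈ Set.Ioi (0:ℝ), HasDerivAt G (x ^ v * Real.log x) x := by
    intro x hx
    have hx0 : x ≠ 0 := ne_of_gt hx
    have h1 : HasDerivAt (fun y : ℝ => y^(v+1)) (((v:ℝ)+1) * x^v) x := by
      have := hasDerivAt_pow (v+1) x
      simpa using this
    have h2 := h1.mul (Real.hasDerivAt_log hx0)
    have h3 := (h2.mul_const (1/((v:ℝ)+1))).sub (h1.mul_const (1/((v:ℝ)+1)^2))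
    refine h3.congr_deriv (Eq.symm ?_)
    have hxp : x^(v+1) * x⁻¹ = x^v := by rw [pow_succ]; field_simp
    field_simp
    ring
  -- derivative of Q ∘ sqrt(c·)
  have hQder : ∀ x ∈ Set.Ioi (0:ℝ), HasDerivAt (fun y => Qfun (Real.sqrt (c*y))) (gd x) x := by
    intro x hx
    have hcx : 0 < c*x := mul_pos hc hx
    have h1 : HasDerivAt (fun y : ℝ => c*y) c x := by
      simpa using (hasDerivAt_id x).const_mul c
    have h2 := (Real.hasDerivAt_sqrt hcx.ne').comp x h1
    have houter := aux_Qfun_hasDeriv (Real.sqrt (c*x))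
    have h3 := houter.comp x h2
    refine h3.congr_deriv (Eq.symm ?_)
    rw [hgd, Real.sq_sqrt hcx.le, hk]
    ring
  -- derivative of H
  have hHder : ∀ x ∈ Set.Ioi (0:ℝ), HasDerivAt H (f₁ x + G x * gd x) x := by
    intro x hx
    have := (hGder x hx).mul (hQder x hx)
    exact this
  have hH0 : H 0 = 0 := by
    rw [hH, hG]
    simp
  -- continuity at 0 from the right
  have hGtends : Tendsto G (nhdsWithin 0 (Set.Ioi 0)) (nhds 0) := by
    have t1 : Tendsto (fun x : ℝ => Real.log x * x ^ ((v:ℝ)+1)) (nhdsWithin 0 (Set.Ioi 0))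
        (nhds 0) := tendsto_log_mul_rpow_nhdsGT_zero (by positivity)
    have t1' : Tendsto (fun x : ℝ => Real.log x * x ^ (v+1)) (nhdsWithin 0 (Set.Ioi 0))
        (nhds 0) := by
      apply t1.congr'
      filter_upwards [self_mem_nhdsWithin] with x hx
      rw [show ((v:ℝ)+1) = ((v+1 : ℕ) : ℝ) by push_cast; ring, Real.rpow_natCast]
    have t2 : Tendsto (fun x : ℝ => x ^ (v+1)) (nhdsWithin 0 (Set.Ioi 0)) (nhds 0) := by
      have := (continuous_pow (v+1)).tendsto (0:ℝ)
      rw [show (0:ℝ)^(v+1) = 0 by simp] at this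
      exact this.mono_left nhdsWithin_le_nhds
    have := (t1'.mul_const (1/((v:ℝ)+1))).sub (t2.mul_const (1/((v:ℝ)+1)^2))
    rw [show (0:ℝ) * (1/((v:ℝ)+1)) - 0 * (1/((v:ℝ)+1)^2) = 0 by ring] at this
    apply this.congr
    intro x
    rw [hG]
    ring
  have hcont : ContinuousWithinAt H (Set.Ici 0) 0 := by
    rw [← Set.Ioi_insert, continuousWithinAt_insert_self]
    rw [ContinuousWithinAt, hH0]
    have habs : Tendsto (fun x => |G x|) (nhdsWithin 0 (Set.Ioi 0)) (nhds 0) := by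
      have := hGtends.abs
      simpa using this
    apply squeeze_zero_norm' _ habs
    filter_upwards [self_mem_nhdsWithin] with x _
    rw [hH]
    rw [Real.norm_eq_abs, abs_mul]
    exact mul_le_of_le_one_right (abs_nonneg _)
      (by rw [abs_of_nonneg (aux_Qfun_nonneg _)]; exact aux_Qfun_le_one _)
  -- limit at infinity
  have htop : Tendsto H atTop (nhds 0) := by
    have hexp : Tendsto (fun x : ℝ => x^(v+2) * Real.exp (-(c/2*x))) atTop (nhds 0) := by
      have h := (isLittleO_pow_exp_pos_mul_atTop (v+2) hr).tendsto_div_nhds_zero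
      apply h.congr
      intro x
      rw [Real.exp_neg, div_eq_mul_inv]
    have hexp4 : Tendsto (fun x : ℝ => (4*k) * (x^(v+2) * Real.exp (-(c/2*x)))) atTop
        (nhds 0) := by
      have := hexp.const_mul (4*k)
      simpa using this
    apply squeeze_zero_norm' _ hexp4
    filter_upwards [eventually_ge_atTop (1:ℝ), eventually_ge_atTop (1/c)] with x hx1 hx2
    have hx : 0 < x := lt_of_lt_of_le one_pos hx1
    have hcx1 : 1 ≤ c * x := by
      rw [div_le_iff₀ hc] at hx2
      linarith [hx2]
    have hs1 : 1 ≤ Real.sqrt (c*x) := by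
      rw [show (1:ℝ) = Real.sqrt 1 by simp]
      exact Real.sqrt_le_sqrt hcx1
    have hspos : 0 < Real.sqrt (c*x) := lt_of_lt_of_le one_pos hs1
    have hQ2 : Qfun (Real.sqrt (c*x)) ≤ k * (2 * Real.exp (-(c*x)/2)) := by
      have h := aux_Qfun_bound (Real.sqrt_pos.2 (by positivity : (0:ℝ) < c*x))
      rw [Real.sq_sqrt (by positivity : (0:ℝ) ≤ c*x)] at h
      refine h.trans ?_
      apply mul_le_mul_of_nonneg_left _ hkpos.le
      apply mul_le_mul_of_nonneg_right _ (Real.exp_pos _).le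
      rw [div_le_iff₀ hspos]
      nlinarith
    have hlogx : |Real.log x| ≤ x := by
      rw [abs_of_nonneg (Real.log_nonneg hx1)]
      linarith [Real.log_le_sub_one_of_pos hx]
    have hGb : |G x| ≤ 2 * x^(v+2) := by
      have hb1 : |x^(v+1) * Real.log x * (1/((v:ℝ)+1))| ≤ x^(v+2) := by
        rw [abs_mul, abs_mul, abs_of_nonneg (pow_nonneg hx.le _),
          abs_of_nonneg (by positivity : (0:ℝ) ≤ 1/((v:ℝ)+1))]
        calc x^(v+1) * |Real.log x| * (1/((v:ℝ)+1))
            ≤ x^(v+1) * x * 1 := by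
              apply mul_le_mul (mul_le_mul_of_nonneg_left hlogx (by positivity))
                (by rw [div_le_one hv1]; linarith) (by positivity) (by positivity)
          _ = x^(v+2) := by rw [mul_one, ← pow_succ]
      have hb2 : |x^(v+1) * (1/((v:ℝ)+1)^2)| ≤ x^(v+2) := by
        rw [abs_mul, abs_of_nonneg (pow_nonneg hx.le _),
          abs_of_nonneg (by positivity : (0:ℝ) ≤ 1/((v:ℝ)+1)^2)]
        calc x^(v+1) * (1/((v:ℝ)+1)^2) ≤ x^(v+1) * 1 := by
              apply mul_le_mul_of_nonneg_left _ (by positivity)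
              rw [div_le_one (by positivity)]
              nlinarith [Nat.cast_nonneg (α := ℝ) v]
          _ ≤ x^(v+2) := by
              rw [mul_one]
              exact pow_le_pow_right₀ hx1 (by omega)
      calc |G x| ≤ |x^(v+1) * Real.log x * (1/((v:ℝ)+1))| + |x^(v+1) * (1/((v:ℝ)+1)^2)| := by
            rw [hG]; exact abs_sub _ _
        _ ≤ 2 * x^(v+2) := by linarith
    rw [hH]
    rw [Real.norm_eq_abs, abs_mul, abs_of_nonneg (aux_Qfun_nonneg _)]
    calc |G x| * Qfun (Real.sqrt (c*x)) ≤ (2*x^(v+2)) * (k * (2 * Real.exp (-(c*x)/2))) := by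
          apply mul_le_mul hGb hQ2 (aux_Qfun_nonneg _) (by positivity)
      _ = 4*k * (x^(v+2) * Real.exp (-(c/2*x))) := by
          rw [show -(c*x)/2 = -(c/2*x) by ring]; ring
  -- measurability
  have hmeasf₁ : AEStronglyMeasurable f₁ (volume.restrict (Set.Ioi 0)) := by
    apply ContinuousOn.aestronglyMeasurable _ measurableSet_Ioi
    apply ContinuousOn.mul
    · apply ContinuousOn.mul ((continuous_pow v).continuousOn)
      intro x hx
      exact (Real.continuousAt_log (ne_of_gt hx)).continuousWithinAt
    · exact (aux_Qfun_cont.comp (Real.continuous_sqrt.comp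
        (continuous_const.mul continuous_id))).continuousOn
  have hmeasG : ContinuousOn G (Set.Ioi 0) := by
    rw [hG]
    apply ContinuousOn.sub
    · apply ContinuousOn.mul
      apply ContinuousOn.mul ((continuous_pow (v+1)).continuousOn)
      · intro x hx
        exact (Real.continuousAt_log (ne_of_gt hx)).continuousWithinAt
      · exact continuousOn_const
    · exact ((continuous_pow (v+1)).continuousOn).mul continuousOn_const
  have hmeasgd : ContinuousOn gd (Set.Ioi 0) := by
    rw [hgd]
    apply ContinuousOn.neg
    apply ContinuousOn.mul
    · exact (continuous_const.mul (Real.continuous_exp.comp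
        (by fun_prop : Continuous fun x : ℝ => -(c*x)/2))).continuousOn
    · apply ContinuousOn.div continuousOn_const
      · exact (by fun_prop : Continuous fun x : ℝ => 2 * Real.sqrt (c*x)).continuousOn
      · intro x hx
        have : 0 < c * x := mul_pos hc hx
        positivity
  -- integrable majorants
  have habsPL : ∀ a : ℝ, 0 < a → IntegrableOn
      (fun x : ℝ => x ^ (a-1) * |Real.log x| * Real.exp (-(c/2*x))) (Set.Ioi 0) := by
    intro a ha
    have h : IntegrableOn (fun x : ℝ => |x ^ (a-1) * Real.log x * Real.exp (-(c/2*x))|)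
        (Set.Ioi 0) := (aux_intOn_PL ha hr).abs
    apply h.congr_fun _ measurableSet_Ioi
    intro x hx
    dsimp only
    rw [abs_mul, abs_mul, abs_of_nonneg (Real.rpow_nonneg (le_of_lt hx) _),
      abs_of_nonneg (Real.exp_pos _).le]
  have hintf₁ : IntegrableOn f₁ (Set.Ioi 0) := by
    apply Integrable.mono' (((habsPL a₁ ha₁).const_mul (k*2/Real.sqrt c))) hmeasf₁
    rw [ae_restrict_iff' measurableSet_Ioi]
    apply ae_of_all
    intro x hx
    have hx : (0:ℝ) < x := hx
    have hsx : 0 < Real.sqrt x := Real.sqrt_pos.2 hx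
    have hsc : 0 < Real.sqrt c := Real.sqrt_pos.2 hc
    rw [hf₁]
    rw [Real.norm_eq_abs, abs_mul, abs_mul, abs_of_nonneg (pow_nonneg hx.le v),
      abs_of_nonneg (aux_Qfun_nonneg _)]
    calc x^v * |Real.log x| * Qfun (Real.sqrt (c*x))
        ≤ x^v * |Real.log x| * (k * ((2/(Real.sqrt c * Real.sqrt x)) *
            Real.exp (-(c/2*x)))) := by
          apply mul_le_mul_of_nonneg_left (hQb x hx) (by positivity)
      _ = k*2/Real.sqrt c * (x ^ (a₁-1) * |Real.log x| * Real.exp (-(c/2*x))) := by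
          rw [e1 x hx]
          field_simp
  have hintGgd : IntegrableOn (fun x => G x * gd x) (Set.Ioi 0) := by
    have hmaj : IntegrableOn (fun x : ℝ => (k * Real.sqrt c / 2) *
        (x ^ (a₂-1) * |Real.log x| * Real.exp (-(c/2*x))
          + x ^ (a₂-1) * Real.exp (-(c/2*x)))) (Set.Ioi 0) :=
      ((habsPL a₂ ha₂).add (aux_intOn_P ha₂ hr)).const_mul _
    apply Integrable.mono' hmaj ((hmeasG.mul hmeasgd).aestronglyMeasurable measurableSet_Ioi)
    rw [ae_restrict_iff' measurableSet_Ioi]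
    apply ae_of_all
    intro x hx
    have hx : (0:ℝ) < x := hx
    have hsx : 0 < Real.sqrt x := Real.sqrt_pos.2 hx
    have hsc : 0 < Real.sqrt c := Real.sqrt_pos.2 hc
    have hgdval : |gd x| = (k * Real.sqrt c / 2) * (Real.exp (-(c/2*x)) / Real.sqrt x) := by
      rw [hgd]
      rw [abs_neg, abs_mul, abs_mul, abs_of_nonneg hkpos.le, abs_of_nonneg (Real.exp_pos _).le,
        abs_of_nonneg (by positivity : (0:ℝ) ≤ c / (2*Real.sqrt (c*x))),
        hfrac x hx, show -(c*x)/2 = -(c/2*x) by ring]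
      ring
    have hGb : |G x| ≤ x^(v+1) * |Real.log x| + x^(v+1) := by
      have hb1 : |x^(v+1) * Real.log x * (1/((v:ℝ)+1))| ≤ x^(v+1) * |Real.log x| := by
        rw [abs_mul, abs_mul, abs_of_nonneg (pow_nonneg hx.le _),
          abs_of_nonneg (by positivity : (0:ℝ) ≤ 1/((v:ℝ)+1))]
        apply mul_le_of_le_one_right (by positivity)
        rw [div_le_one hv1]; linarith
      have hb2 : |x^(v+1) * (1/((v:ℝ)+1)^2)| ≤ x^(v+1) := by
        rw [abs_mul, abs_of_nonneg (pow_nonneg hx.le _),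
          abs_of_nonneg (by positivity : (0:ℝ) ≤ 1/((v:ℝ)+1)^2)]
        apply mul_le_of_le_one_right (by positivity)
        rw [div_le_one (by positivity)]
        nlinarith [Nat.cast_nonneg (α := ℝ) v]
      calc |G x| ≤ |x^(v+1) * Real.log x * (1/((v:ℝ)+1))| + |x^(v+1) * (1/((v:ℝ)+1)^2)| := by
            rw [hG]; exact abs_sub _ _
        _ ≤ x^(v+1) * |Real.log x| + x^(v+1) := by linarith
    rw [Real.norm_eq_abs, Pi.mul_apply, abs_mul, hgdval]
    calc |G x| * ((k * Real.sqrt c / 2) * (Real.exp (-(c/2*x)) / Real.sqrt x))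
        ≤ (x^(v+1) * |Real.log x| + x^(v+1)) *
            ((k * Real.sqrt c / 2) * (Real.exp (-(c/2*x)) / Real.sqrt x)) := by
          apply mul_le_mul_of_nonneg_right hGb (by positivity)
      _ = (k * Real.sqrt c / 2) * (x ^ (a₂-1) * |Real.log x| * Real.exp (-(c/2*x))
            + x ^ (a₂-1) * Real.exp (-(c/2*x))) := by
          rw [e2 x hx]
          field_simp
  -- integration by parts
  have hparts := integral_Ioi_of_hasDerivAt_of_tendsto hcont hHder (hintf₁.add hintGgd) htop
  rw [hH0, sub_zero] at hparts
  have hsplit : (∫ x in Set.Ioi (0:ℝ), (f₁ x + G x * gd x))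
      = (∫ x in Set.Ioi (0:ℝ), f₁ x) + ∫ x in Set.Ioi (0:ℝ), G x * gd x :=
    integral_add hintf₁ hintGgd
  have hmain : (∫ x in Set.Ioi (0:ℝ), f₁ x) = - ∫ x in Set.Ioi (0:ℝ), G x * gd x := by
    rw [hsplit] at hparts
    linarith
  -- compute the remaining integral
  have hGgdpt : ∀ x ∈ Set.Ioi (0:ℝ), G x * gd x
      = -(k * Real.sqrt c / 2) * (x ^ (a₂-1) * Real.log x * Real.exp (-(c/2*x)) * (1/((v:ℝ)+1))
          - x ^ (a₂-1) * Real.exp (-(c/2*x)) * (1/((v:ℝ)+1)^2)) := by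
    intro x hx
    have hx : (0:ℝ) < x := hx
    have hsx : 0 < Real.sqrt x := Real.sqrt_pos.2 hx
    have hsc : 0 < Real.sqrt c := Real.sqrt_pos.2 hc
    simp only [hG, hgd]
    rw [hfrac x hx, e2 x hx, show -(c*x)/2 = -(c/2*x) by ring]
    field_simp
  have hval : (∫ x in Set.Ioi (0:ℝ), G x * gd x)
      = -(k * Real.sqrt c / 2) *
          (((1/(c/2)) ^ a₂ * (Real.Gamma a₂ * digamma a₂ - Real.log (c/2) * Real.Gamma a₂))
              * (1/((v:ℝ)+1))
            - ((1/(c/2)) ^ a₂ * Real.Gamma a₂) * (1/((v:ℝ)+1)^2)) := by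
    rw [setIntegral_congr_fun measurableSet_Ioi hGgdpt, MeasureTheory.integral_const_mul,
      integral_sub ((aux_intOn_PL ha₂ hr).mul_const _) ((aux_intOn_P ha₂ hr).mul_const _),
      MeasureTheory.integral_mul_const, MeasureTheory.integral_mul_const,
      aux_val_PL ha₂ hr, Real.integral_rpow_mul_exp_neg_mul_Ioi ha₂ hr]
  -- final algebra
  rw [hmain, hval]
  have h2c : (0:ℝ) < 2/c := by positivity
  have h1r : (1/(c/2) : ℝ) = 2/c := by field_simp
  have hsplitpow : (2/c) ^ a₂ = (2/c)^(v+1) * Real.sqrt (2/c) := by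
    rw [ha₂def, show (v:ℝ) + 3/2 = ((v+1 : ℕ) : ℝ) + 1/2 by push_cast; ring,
      Real.rpow_add h2c, Real.rpow_natCast, Real.sqrt_eq_rpow]
  have hsqrt2c : Real.sqrt (2/c) = Real.sqrt 2 / Real.sqrt c := Real.sqrt_div' 2 hc.le ▸ by
    rw [Real.sqrt_div (by norm_num : (0:ℝ) ≤ 2)]
  have hk2 : k = 1 / (Real.sqrt 2 * Real.sqrt π) := by
    rw [hk, Real.sqrt_mul (by norm_num : (0:ℝ) ≤ 2)]
  have hlogr : Real.log (c/2) = - Real.log (2/c) := by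
    rw [Real.log_div hc.ne' (by norm_num), Real.log_div (by norm_num) hc.ne']
    ring
  have hGam : Real.Gamma a₂ = (((2*v+1)‼ : ℕ) : ℝ) * Real.sqrt π / 2^(v+1) := by
    rw [ha₂def]; exact aux_Gamma_add_half v
  have hdf : ((2*v+2)‼ : ℝ) = 2^(v+1) * ((v+1)! : ℝ) := by
    rw [show (((2*v+2)‼ : ℕ) : ℝ) = ((2^(v+1) * (v+1)! : ℕ) : ℝ) from
      congrArg _ (aux_doubleFactorial_even v)]
    push_cast
    ring
  have hfact : ((v+1)! : ℝ) = ((v:ℝ)+1) * (v.factorial : ℝ) := by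
    rw [Nat.factorial_succ]
    push_cast
    ring
  rw [h1r, hsplitpow, hsqrt2c, hk2, hlogr, hGam, hdf, hfact, ha₂def]
  have hs2 : (0:ℝ) < Real.sqrt 2 := by positivity
  have hsp : (0:ℝ) < Real.sqrt π := Real.sqrt_pos.2 Real.pi_pos
  have hsc : (0:ℝ) < Real.sqrt c := Real.sqrt_pos.2 hc
  have hdfpos : (0:ℝ) < (((2*v+1)‼ : ℕ) : ℝ) := by
    exact_mod_cast Nat.pos_of_ne_zero (by positivity)
  have hfp : (0:ℝ) < (v.factorial : ℝ) := by exact_mod_cast v.factorial_pos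
  field_simp
  ring
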